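/- Let p be prime and a = (a_n)_{n≥0} a non-ultimately-periodic sequence over P = {0,...,p−1} with ξ = Σ a_n p^n ∈ ℚ_p. Assume there exist n_0 ≥ 1 and κ ≥ 2 with p(a,n) ≤ κn for all n ≥ n_0, and that Dio(a) is finite. Then w_1(ξ) ≤ 8(κ+1)^2(2κ+1)·Dio(a) − 1; in particular ξ is not a U_1-number. -/

import Mathlib

/-- The length of the fractional power `V^w` of a word of length `s`. -/
def powLen (s : ℕ) (w : ℚ) : ℕ := ⌊w⌋.toNat * s + ⌈(w - ⌊w⌋) * s⌉.toNat

/-- `U V^w` is a prefix of the infinite word `a`. -/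
def IsPrefixPow {A : Type*} (a : ℕ → A) (U V : List A) (w : ℚ) : Prop :=
  (∀ i < U.length, a i = U.getD i (a 0)) ∧
  ∀ i, U.length ≤ i → i < U.length + powLen V.length w →
    a i = V.getD ((i - U.length) % V.length) (a 0)

/-- The sequence `a` is ultimately periodic. -/
def UltimatelyPeriodic {A : Type*} (a : ℕ → A) : Prop :=
  ∃ r s : ℕ, 0 < s ∧ ∀ n, r ≤ n → a (n + s) = a n

/-- Condition `(*)_ρ`. -/
def DioCond {A : Type*} (a : ℕ → A) (ρ : ℝ) : Prop :=
  ∃ (U V : ℕ → List A) (w : ℕ → ℚ),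
    (∀ n, V n ≠ [] ∧ 0 ≤ w n ∧ IsPrefixPow a (U n) (V n) (w n) ∧
      ρ * (((U n).length : ℝ) + (V n).length) ≤
        (((U n).length : ℝ) + powLen (V n).length (w n))) ∧
    StrictMono fun n => powLen (V n).length (w n)

/-- The Diophantine exponent of `a`. -/
noncomputable def dioExp {A : Type*} (a : ℕ → A) : ℝ := sSup {ρ : ℝ | DioCond a ρ}

/-- The subword complexity of `a`. -/
noncomputable def complexity {A : Type*} (a : ℕ → A) (n : ℕ) : ℕ :=
  Set.ncard {wd : List A | ∃ i, wd = (List.range n).map fun j => a (i + j)}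

/-- The naive height of a rational number. -/
def ratHeight (q : ℚ) : ℕ := max q.num.natAbs q.den

/-- The set of good rational approximations to `ξ` of exponent `w`;
`w₁(ξ) ≤ c` iff this set is finite for every `w > c`. -/
def approxSet {p : ℕ} [Fact p.Prime] (ξ : ℚ_[p]) (w : ℝ) : Set ℚ :=
  {α | 0 < ‖ξ - (α : ℚ_[p])‖ ∧ ‖ξ - (α : ℚ_[p])‖ ≤ (ratHeight α : ℝ) ^ (-(w + 1))}

/-!
If `α` satisfies `‖ξ - α‖ ≤ H(α)^{-(w+1)}` with `H(α) ≈ p^L`, pigeonhole on the at most `κn`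
factors of length `n = L + 2` gives positions `i < i + t ≤ κn` with equal factors, so the digits of
`ξ` follow the ultimately periodic word `a₀ ⋯ a_{i-1} (a_i ⋯ a_{i+t-1})^∞` for `n` letters past its
first period. The rational `β` with that expansion has height at most `p^{i+t}` and is
`p^{-(n+i+t)}`-close to `ξ`, so the `p`-adic Liouville inequality `‖α - β‖ ≥ 1/(2 H(α) H(β))`
forces `α = β` once `w ≥ κ + 1`. Then `‖ξ - β‖ ≤ p^{-(w+1)L}` means the periodic pattern persists
for `(w+1)L` digits: a repetition of exponent `(w+1)/(2κ)`. Infinitely many such `α` would give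
`Dio(a) ≥ (w+1)/(2κ)`.
-/

open Finset Filter

/-- The ultimately periodic word `a₀ ⋯ a_{i-1} (a_i ⋯ a_{i+t-1})^∞`. -/
def periodicExt {A : Type*} (a : ℕ → A) (i t : ℕ) (k : ℕ) : A :=
  if k < i then a k else a (i + (k - i) % t)

lemma periodicExt_add {A : Type*} (a : ℕ → A) (i t k : ℕ) :
    periodicExt a i t (i + k) = a (i + k % t) := by
  simp [periodicExt]

section Words

variable {A : Type*} {a : ℕ → A}

lemma finite_setOf_factors (ha : (Set.range a).Finite) (n : ℕ) :
    {wd : List A | ∃ i, wd = (List.range n).map fun j => a (i + j)}.Finite := by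
  have := ha.to_subtype
  refine ((List.finite_length_eq (Set.range a) n).image (List.map Subtype.val)).subset ?_
  rintro _ ⟨i, rfl⟩
  exact ⟨(List.range n).map fun j => (⟨a (i + j), i + j, rfl⟩ : Set.range a), by simp, by simp⟩

lemma exists_factor_eq_of_complexity_le (ha : (Set.range a).Finite) {n N : ℕ}
    (h : complexity a n ≤ N) : ∃ i j, i < j ∧ j ≤ N ∧ ∀ k < n, a (i + k) = a (j + k) := by
  obtain ⟨x, hx, y, hy, hxy, hf⟩ := Set.exists_ne_map_eq_of_ncard_lt_of_maps_to
    (s := ((range (N + 1) : Finset ℕ) : Set ℕ))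
    (f := fun i => (List.range n).map fun j => a (i + j))
    (t := {wd | ∃ i, wd = (List.range n).map fun j => a (i + j)})
    (by rw [Set.ncard_coe_finset, card_range]; exact Nat.lt_succ_of_le h)
    (fun i _ => ⟨i, rfl⟩) (finite_setOf_factors ha n)
  have hfac : ∀ k < n, a (x + k) = a (y + k) :=
    fun k hk => List.map_inj_left.mp hf k (List.mem_range.mpr hk)
  simp only [coe_range, Set.mem_Iio] at hx hy
  rcases hxy.lt_or_gt with hlt | hlt
  · exact ⟨x, y, hlt, by omega, hfac⟩
  · exact ⟨y, x, hlt, by omega, fun k hk => (hfac k hk).symm⟩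

lemma eq_periodicExt_of_eqOn_shift {i t n : ℕ} (ht : 0 < t)
    (h : ∀ k < n, a (i + k) = a (i + t + k)) : ∀ k < i + t + n, a k = periodicExt a i t k := by
  have hshift : ∀ m < t + n, a (i + m) = a (i + m % t) := by
    intro m
    induction m using Nat.strong_induction_on with
    | _ m ih =>
      intro hm
      rcases lt_or_ge m t with hmt | hmt
      · rw [Nat.mod_eq_of_lt hmt]
      · obtain ⟨m, rfl⟩ := Nat.exists_eq_add_of_le hmt
        rw [← add_assoc, ← h m (by omega), ih m (by omega) (by omega), Nat.add_mod_left]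
  intro k hk
  rcases lt_or_ge k i with hki | hki
  · simp [periodicExt, hki]
  · obtain ⟨m, rfl⟩ := Nat.exists_eq_add_of_le hki
    rw [periodicExt_add, hshift m (by omega)]

lemma exists_eq_periodicExt_of_complexity_le (ha : (Set.range a).Finite) {n N : ℕ}
    (h : complexity a n ≤ N) :
    ∃ i t, 0 < t ∧ i + t ≤ N ∧ ∀ k < i + t + n, a k = periodicExt a i t k := by
  obtain ⟨i, j, hij, hjN, hfac⟩ := exists_factor_eq_of_complexity_le ha h
  obtain ⟨t, rfl⟩ := Nat.exists_eq_add_of_lt hij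
  exact ⟨i, t + 1, by omega, by omega, eq_periodicExt_of_eqOn_shift (by omega) hfac⟩

/-- `a` has a prefix `U V^{P/|V|}` with `|U| = i`, `|V| = t` and `|U V^{P/|V|}| ≥ ρ |U V|`. -/
def HasPowerPrefix (a : ℕ → A) (ρ : ℝ) (P : ℕ) : Prop :=
  ∃ i t, 0 < t ∧ (∀ k < i + P, a k = periodicExt a i t k) ∧ ρ * ((i : ℝ) + t) ≤ i + P

lemma powLen_natCast_div (s P : ℕ) (hs : s ≠ 0) : powLen s ((P : ℚ) / s) = P := by
  have hsQ : (s : ℚ) ≠ 0 := Nat.cast_ne_zero.mpr hs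
  have hfloor : ⌊(P : ℚ) / s⌋ = ((P / s : ℕ) : ℤ) := by
    exact_mod_cast Rat.floor_natCast_div_natCast P s
  have hfrac : ((P : ℚ) / s - ⌊(P : ℚ) / s⌋) * s = ((P % s : ℕ) : ℚ) := by
    rw [hfloor, Int.cast_natCast, sub_mul, div_mul_cancel₀ _ hsQ]
    have : (s : ℚ) * ((P / s : ℕ) : ℚ) + ((P % s : ℕ) : ℚ) = P := by
      exact_mod_cast Nat.div_add_mod P s
    linear_combination -this
  rw [powLen, hfrac, hfloor, Int.toNat_natCast, Int.ceil_natCast, Int.toNat_natCast, mul_comm]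
  exact Nat.div_add_mod P s

lemma isPrefixPow_of_eqOn_periodicExt {i t P : ℕ} (ht : 0 < t)
    (h : ∀ k < i + P, a k = periodicExt a i t k) :
    IsPrefixPow a ((List.range i).map a) ((List.range t).map fun k => a (i + k)) ((P : ℚ) / t) := by
  simp only [IsPrefixPow, List.length_map, List.length_range, powLen_natCast_div t P ht.ne']
  refine ⟨fun k hk => ?_, fun k hik hk => ?_⟩
  · simp [List.getD_eq_getElem?_getD, hk]
  · rw [h k hk, periodicExt, if_neg (by omega)]
    simp [List.getD_eq_getElem?_getD, Nat.mod_lt _ ht]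

lemma dioCond_of_frequently_hasPowerPrefix {ρ : ℝ} (h : ∃ᶠ P in atTop, HasPowerPrefix a ρ P) :
    DioCond a ρ := by
  obtain ⟨φ, hφ, hP⟩ := extraction_of_frequently_atTop h
  choose I T hT hper hρ using hP
  have hpowLen : ∀ n, powLen ((List.range (T n)).map fun k => a (I n + k)).length
      ((φ n : ℚ) / T n) = φ n := by
    intro n
    rw [List.length_map, List.length_range, powLen_natCast_div _ _ (hT n).ne']
  refine ⟨fun n => (List.range (I n)).map a, fun n => (List.range (T n)).map fun k => a (I n + k),
    fun n => (φ n : ℚ) / T n, fun n => ⟨?_, by positivity,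
      isPrefixPow_of_eqOn_periodicExt (hT n) (hper n), ?_⟩, ?_⟩
  · simpa using (hT n).ne'
  · simpa [powLen_natCast_div _ _ (hT n).ne'] using hρ n
  · simpa only [hpowLen] using hφ

lemma dioCond_one : DioCond a 1 := by
  refine dioCond_of_frequently_hasPowerPrefix ((eventually_gt_atTop 0).frequently.mono
    fun P hP => ⟨0, P, hP, fun k hk => ?_, by simp⟩)
  simp [periodicExt, Nat.mod_eq_of_lt (show k < P by omega)]

end Words

noncomputable def digitSeries (p : ℕ) [Fact p.Prime] (c : ℕ → ℕ) : ℚ_[p] :=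
  ∑' n, (c n : ℚ_[p]) * (p : ℚ_[p]) ^ n

section DigitSeries

variable {p : ℕ} [hp : Fact p.Prime]

lemma norm_natCast_mul_pow_le (c n : ℕ) : ‖(c : ℚ_[p]) * (p : ℚ_[p]) ^ n‖ ≤ (p : ℝ)⁻¹ ^ n := by
  rw [norm_mul, norm_pow, Padic.norm_p]
  exact mul_le_of_le_one_left (by positivity) (by exact_mod_cast Padic.norm_int_le_one (c : ℤ))

lemma summable_digitSeries (c : ℕ → ℕ) :
    Summable fun n => (c n : ℚ_[p]) * (p : ℚ_[p]) ^ n := by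
  have hp1 : (p : ℝ)⁻¹ < 1 := inv_lt_one_of_one_lt₀ (by exact_mod_cast hp.out.one_lt)
  exact .of_norm (.of_nonneg_of_le (fun n => norm_nonneg _)
    (fun n => norm_natCast_mul_pow_le (c n) n) (summable_geometric_of_lt_one (by positivity) hp1))

lemma norm_digitSeries_le_one (c : ℕ → ℕ) : ‖digitSeries p c‖ ≤ 1 := by
  refine (IsUltrametricDist.norm_tsum_le _).trans (ciSup_le fun n => ?_)
  exact (norm_natCast_mul_pow_le (c n) n).trans
    (pow_le_one₀ (by positivity) (inv_le_one_of_one_le₀ (by exact_mod_cast hp.out.one_le)))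

lemma digitSeries_eq_sum_add_shift (c : ℕ → ℕ) (N : ℕ) :
    digitSeries p c = ∑ k ∈ range N, (c k : ℚ_[p]) * (p : ℚ_[p]) ^ k +
      (p : ℚ_[p]) ^ N * digitSeries p (fun k => c (N + k)) := by
  rw [digitSeries, ← (summable_digitSeries c).sum_add_tsum_nat_add N, digitSeries,
    ← tsum_mul_left]
  congr 2 with k
  rw [add_comm k N, pow_add]
  ring

lemma digitSeries_sub_eq_of_eqOn {b c : ℕ → ℕ} {N : ℕ} (h : ∀ k < N, b k = c k) :
    digitSeries p b - digitSeries p c =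
      (p : ℚ_[p]) ^ N *
        (digitSeries p (fun k => b (N + k)) - digitSeries p (fun k => c (N + k))) := by
  rw [digitSeries_eq_sum_add_shift b N, digitSeries_eq_sum_add_shift c N,
    sum_congr rfl fun k hk => by rw [h k (mem_range.mp hk)]]
  ring

lemma norm_digitSeries_sub_le_one (b c : ℕ → ℕ) : ‖digitSeries p b - digitSeries p c‖ ≤ 1 := by
  rw [sub_eq_add_neg]
  exact (IsUltrametricDist.norm_add_le_max _ _).trans
    (max_le (norm_digitSeries_le_one b) ((norm_neg _).trans_le (norm_digitSeries_le_one c)))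

lemma norm_digitSeries_sub_le_of_eqOn {b c : ℕ → ℕ} {N : ℕ} (h : ∀ k < N, b k = c k) :
    ‖digitSeries p b - digitSeries p c‖ ≤ (p : ℝ)⁻¹ ^ N := by
  rw [digitSeries_sub_eq_of_eqOn h, norm_mul, norm_pow, Padic.norm_p]
  exact mul_le_of_le_one_right (by positivity) (norm_digitSeries_sub_le_one _ _)

/-- Digits below `p` are units, so the first differing digit determines the distance. -/
lemma norm_digitSeries_sub_eq_of_eqOn_of_ne {b c : ℕ → ℕ} (hb : ∀ k, b k < p) (hc : ∀ k, c k < p)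
    {N : ℕ} (h : ∀ k < N, b k = c k) (hN : b N ≠ c N) :
    ‖digitSeries p b - digitSeries p c‖ = (p : ℝ)⁻¹ ^ N := by
  rw [digitSeries_sub_eq_of_eqOn h, norm_mul, norm_pow, Padic.norm_p]
  rw [digitSeries_eq_sum_add_shift _ 1, digitSeries_eq_sum_add_shift (fun k => c (N + k)) 1]
  simp only [sum_range_one, pow_zero, mul_one, pow_one, add_zero]
  have hdigit : ‖(((b N : ℤ) - c N : ℤ) : ℚ_[p])‖ = 1 := by
    refine le_antisymm (Padic.norm_int_le_one _) (not_lt.mp fun hlt => hN ?_)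
    have := Int.eq_zero_of_abs_lt_dvd (Padic.norm_intCast_lt_one_iff.mp hlt)
      (abs_sub_lt_of_nonneg_of_lt (by positivity) (by exact_mod_cast hb N) (by positivity)
        (by exact_mod_cast hc N))
    omega
  have htail : ‖(p : ℚ_[p]) * (digitSeries p (fun k => b (N + (1 + k))) -
      digitSeries p (fun k => c (N + (1 + k))))‖ < 1 := by
    rw [norm_mul, Padic.norm_p]
    exact (mul_le_of_le_one_right (by positivity) (norm_digitSeries_sub_le_one _ _)).trans_lt
      (inv_lt_one_of_one_lt₀ (by exact_mod_cast hp.out.one_lt))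
  have hsplit : (b N : ℚ_[p]) + p * digitSeries p (fun k => b (N + (1 + k))) -
      (c N + p * digitSeries p (fun k => c (N + (1 + k)))) =
      (((b N : ℤ) - c N : ℤ) : ℚ_[p]) + p * (digitSeries p (fun k => b (N + (1 + k))) -
        digitSeries p (fun k => c (N + (1 + k)))) := by
    push_cast; ring
  rw [hsplit, IsUltrametricDist.norm_add_eq_max_of_norm_ne_norm (hdigit ▸ htail.ne'), hdigit,
    max_eq_left htail.le, mul_one]

lemma eq_of_norm_digitSeries_sub_lt {b c : ℕ → ℕ} (hb : ∀ k, b k < p) (hc : ∀ k, c k < p)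
    {k : ℕ} (h : ‖digitSeries p b - digitSeries p c‖ < (p : ℝ)⁻¹ ^ k) : b k = c k := by
  classical
  by_contra hk
  have hex : ∃ n, b n ≠ c n := ⟨k, hk⟩
  have hle : Nat.find hex ≤ k := Nat.find_min' hex hk
  rw [norm_digitSeries_sub_eq_of_eqOn_of_ne hb hc (fun l hl => not_not.mp (Nat.find_min hex hl))
    (Nat.find_spec hex)] at h
  exact h.not_ge (pow_le_pow_of_le_one (by positivity)
    (inv_le_one_of_one_le₀ (by exact_mod_cast hp.out.one_le)) hle)

lemma eq_of_norm_digitSeries_sub_le_rpow {b c : ℕ → ℕ} (hb : ∀ k, b k < p) (hc : ∀ k, c k < p)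
    {x : ℝ} (h : ‖digitSeries p b - digitSeries p c‖ ≤ (p : ℝ) ^ (-x)) {k : ℕ} (hk : (k : ℝ) < x) :
    b k = c k := by
  refine eq_of_norm_digitSeries_sub_lt hb hc (h.trans_lt ?_)
  rw [inv_pow, ← Real.rpow_natCast, ← Real.rpow_neg (by positivity),
    Real.rpow_lt_rpow_left_iff (by exact_mod_cast hp.out.one_lt)]
  exact neg_lt_neg hk

end DigitSeries

lemma ratHeight_pos (q : ℚ) : 0 < ratHeight q :=
  q.den_pos.trans_le (le_max_right _ _)


lemma ratHeight_intCast_div_le (x y : ℤ) (hy : y ≠ 0) :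
    ratHeight ((x : ℚ) / y) ≤ max x.natAbs y.natAbs := by
  rw [Rat.intCast_div_eq_divInt, ratHeight]
  refine max_le_max ?_ (Nat.le_of_dvd (Int.natAbs_pos.mpr hy) ?_)
  · rcases eq_or_ne x 0 with rfl | hx
    · simp
    · exact Nat.le_of_dvd (Int.natAbs_pos.mpr hx) (Int.natAbs_dvd_natAbs.mpr (Rat.num_dvd x hy))
  · exact Int.natAbs_dvd_natAbs.mpr (Rat.den_dvd x y)

lemma finite_setOf_ratHeight_le (B : ℕ) : {q : ℚ | ratHeight q ≤ B}.Finite := by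
  refine (((Set.finite_Icc (-(B : ℤ)) B).prod (Set.finite_Icc 0 B)).preimage
    (f := fun q : ℚ => (q.num, q.den))
    fun x _ y _ h => Rat.ext (congrArg Prod.fst h) (congrArg Prod.snd h)).subset fun q hq => ?_
  simp only [ratHeight, Set.mem_ofPred_eq, max_le_iff] at hq
  simp only [Set.mem_preimage, Set.mem_prod, Set.mem_Icc]
  omega

section Separation

variable {p : ℕ} [hp : Fact p.Prime]

lemma inv_natAbs_le_norm_intCast {z : ℤ} (hz : z ≠ 0) : (z.natAbs : ℝ)⁻¹ ≤ ‖(z : ℚ_[p])‖ := by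
  have hle : p ^ padicValInt p z ≤ z.natAbs := Nat.le_of_dvd (Int.natAbs_pos.mpr hz) (by
    simpa [Int.natAbs_pow] using Int.natAbs_dvd_natAbs.mpr (padicValInt_dvd (p := p) z))
  rw [show (z : ℚ_[p]) = ((z : ℚ) : ℚ_[p]) by norm_cast, Padic.eq_padicNorm, padicNorm,
    if_neg (by exact_mod_cast hz), padicValRat.of_int]
  push_cast
  rw [zpow_neg, zpow_natCast]
  exact inv_anti₀ (pow_pos (by exact_mod_cast hp.out.pos) _) (by exact_mod_cast hle)

lemma inv_two_mul_ratHeight_le_norm_sub {α β : ℚ} (hne : α ≠ β) :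
    ((2 * ratHeight α * ratHeight β : ℕ) : ℝ)⁻¹ ≤ ‖(α : ℚ_[p]) - β‖ := by
  set D : ℤ := α.num * β.den - β.num * α.den
  have hsub : (α : ℚ_[p]) - β = (D : ℚ_[p]) / ((α.den * β.den : ℕ) : ℚ_[p]) := by
    have hα : (α.den : ℚ_[p]) ≠ 0 := Nat.cast_ne_zero.mpr α.den_nz
    have hβ : (β.den : ℚ_[p]) ≠ 0 := Nat.cast_ne_zero.mpr β.den_nz
    rw [Rat.cast_def α, Rat.cast_def β]
    push_cast
    field_simp
    simp only [D]
    push_cast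
    ring
  have hD : D ≠ 0 := by
    rintro hD
    rw [hD, Int.cast_zero, zero_div, sub_eq_zero] at hsub
    exact hne (Rat.cast_injective hsub)
  have hDle : D.natAbs ≤ 2 * ratHeight α * ratHeight β := by
    have := Int.natAbs_sub_le (α.num * β.den) (β.num * α.den)
    simp only [Int.natAbs_mul, Int.natAbs_natCast] at this
    have h1 := Nat.mul_le_mul (le_max_left α.num.natAbs α.den) (le_max_right β.num.natAbs β.den)
    have h2 := Nat.mul_le_mul (le_max_left β.num.natAbs β.den) (le_max_right α.num.natAbs α.den)
    simp only [ratHeight] at *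
    linarith
  calc ((2 * ratHeight α * ratHeight β : ℕ) : ℝ)⁻¹ ≤ (D.natAbs : ℝ)⁻¹ :=
        inv_anti₀ (by exact_mod_cast Int.natAbs_pos.mpr hD) (by exact_mod_cast hDle)
    _ ≤ ‖(D : ℚ_[p])‖ := inv_natAbs_le_norm_intCast hD
    _ ≤ ‖(α : ℚ_[p]) - β‖ := by
        rw [hsub, norm_div]
        exact le_div_self (norm_nonneg _) (norm_pos_iff.mpr (Nat.cast_ne_zero.mpr (by positivity)))
          (by exact_mod_cast Padic.norm_int_le_one ((α.den * β.den : ℕ) : ℤ))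

lemma eq_of_norm_sub_lt_inv_two_mul_ratHeight {ξ : ℚ_[p]} {α β : ℚ}
    (hα : ‖ξ - α‖ < ((2 * ratHeight α * ratHeight β : ℕ) : ℝ)⁻¹)
    (hβ : ‖ξ - β‖ < ((2 * ratHeight α * ratHeight β : ℕ) : ℝ)⁻¹) : α = β := by
  by_contra hne
  refine (inv_two_mul_ratHeight_le_norm_sub (p := p) hne).not_gt ?_
  calc ‖(α : ℚ_[p]) - β‖ = dist (α : ℚ_[p]) β := (dist_eq_norm _ _).symm
    _ ≤ max (dist (α : ℚ_[p]) ξ) (dist ξ (β : ℚ_[p])) := IsUltrametricDist.dist_triangle_max _ _ _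
    _ < _ := by
        rw [dist_comm, dist_eq_norm, dist_eq_norm]
        exact max_lt hα hβ

end Separation

lemma sum_range_mul_pow_lt {p : ℕ} {c : ℕ → ℕ} (n : ℕ) (hc : ∀ k < n, c k < p) :
    ∑ k ∈ range n, c k * p ^ k < p ^ n := by
  induction n with
  | zero => simp
  | succ n ih =>
    rw [sum_range_succ, pow_succ]
    calc ∑ k ∈ range n, c k * p ^ k + c n * p ^ n < p ^ n + c n * p ^ n :=
          Nat.add_lt_add_right (ih fun k hk => hc k (by omega)) _
      _ = (c n + 1) * p ^ n := by ring
      _ ≤ p ^ n * p := by rw [mul_comm]; exact Nat.mul_le_mul_left _ (hc n (by omega))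

/-- The rational number whose `p`-adic digits are `periodicExt a i t`. -/
def periodicValue (p : ℕ) (a : ℕ → ℕ) (i t : ℕ) : ℚ :=
  (∑ k ∈ range i, a k * p ^ k : ℕ) -
    (p : ℚ) ^ i * (∑ k ∈ range t, a (i + k) * p ^ k : ℕ) / ((p : ℚ) ^ t - 1)

section PeriodicValue

variable {p : ℕ} [hp : Fact p.Prime]

lemma digitSeries_mul_one_sub_pow_of_periodic {d : ℕ → ℕ} {t : ℕ} (hd : ∀ k, d (t + k) = d k) :
    digitSeries p d * (1 - (p : ℚ_[p]) ^ t) = ∑ k ∈ range t, (d k : ℚ_[p]) * (p : ℚ_[p]) ^ k := by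
  have h := digitSeries_eq_sum_add_shift (p := p) d t
  simp only [hd] at h
  linear_combination h

lemma digitSeries_periodicExt (a : ℕ → ℕ) {i t : ℕ} (ht : 0 < t) :
    digitSeries p (periodicExt a i t) = ((periodicValue p a i t : ℚ) : ℚ_[p]) := by
  have hpt : (p : ℚ_[p]) ^ t - 1 ≠ 0 := by
    refine sub_ne_zero.mpr fun h => ?_
    have hnorm := congrArg norm h
    rw [norm_pow, Padic.norm_p, norm_one] at hnorm
    exact (pow_lt_one₀ (by positivity) (inv_lt_one_of_one_lt₀
      (by exact_mod_cast hp.out.one_lt)) ht.ne').ne hnorm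
  have hper := digitSeries_mul_one_sub_pow_of_periodic (p := p) (d := fun k => a (i + k % t))
    (t := t) (fun k => by simp [Nat.add_mod_left])
  rw [sum_congr rfl fun k hk => by rw [Nat.mod_eq_of_lt (mem_range.mp hk)]] at hper
  have hprefix : ∑ k ∈ range i, ((periodicExt a i t k : ℕ) : ℚ_[p]) * (p : ℚ_[p]) ^ k =
      ∑ k ∈ range i, (a k : ℚ_[p]) * (p : ℚ_[p]) ^ k :=
    sum_congr rfl fun k hk => by simp [periodicExt, mem_range.mp hk]
  rw [digitSeries_eq_sum_add_shift _ i, hprefix]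
  simp only [periodicExt_add, periodicValue]
  push_cast
  rw [← hper]
  field_simp
  ring

lemma ratHeight_periodicValue_le {a : ℕ → ℕ} (ha : ∀ k, a k < p) {i t : ℕ} (ht : 0 < t) :
    ratHeight (periodicValue p a i t) ≤ p ^ (i + t) := by
  set A := ∑ k ∈ range i, a k * p ^ k
  set B := ∑ k ∈ range t, a (i + k) * p ^ k
  have hA : A < p ^ i := sum_range_mul_pow_lt i fun k _ => ha k
  have hB : B < p ^ t := sum_range_mul_pow_lt t fun k _ => ha (i + k)
  have hpt : 1 < p ^ t := Nat.one_lt_pow ht.ne' hp.out.one_lt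
  have heq : periodicValue p a i t =
      (((A * (p ^ t - 1) : ℕ) - p ^ i * B : ℤ) : ℚ) / ((p ^ t - 1 : ℕ) : ℤ) := by
    have hq : (p : ℚ) ^ t - 1 ≠ 0 := by
      rw [sub_ne_zero]; exact_mod_cast hpt.ne'
    change (A : ℚ) - (p : ℚ) ^ i * B / ((p : ℚ) ^ t - 1) = _
    push_cast [hpt.le]
    field_simp
  rw [heq]
  refine (ratHeight_intCast_div_le _ _ (by omega)).trans (max_le ?_ ?_)
  · have hA' : A * (p ^ t - 1) < p ^ (i + t) := by
      rw [pow_add]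
      exact (Nat.mul_le_mul_left A (Nat.sub_le _ 1)).trans_lt
        (Nat.mul_lt_mul_of_pos_right hA (by omega))
    have hB' : p ^ i * B < p ^ (i + t) := by
      rw [pow_add]
      exact Nat.mul_lt_mul_of_pos_left hB (Nat.pow_pos hp.out.pos)
    have hx : |((A * (p ^ t - 1) : ℕ) - p ^ i * B : ℤ)| < p ^ (i + t) :=
      abs_sub_lt_of_nonneg_of_lt (by positivity) (by exact_mod_cast hA') (by positivity)
        (by exact_mod_cast hB')
    rw [← Int.natCast_natAbs] at hx
    exact_mod_cast hx.le
  · have := Nat.pow_le_pow_right hp.out.pos (Nat.le_add_left t i)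
    omega

lemma norm_digitSeries_sub_periodicValue_le {a : ℕ → ℕ} {i t N : ℕ} (ht : 0 < t)
    (h : ∀ k < N, a k = periodicExt a i t k) :
    ‖digitSeries p a - (periodicValue p a i t : ℚ_[p])‖ ≤ (p : ℝ)⁻¹ ^ N := by
  rw [← digitSeries_periodicExt a ht]
  exact norm_digitSeries_sub_le_of_eqOn h

end PeriodicValue

section Approximation

variable {p : ℕ} [hp : Fact p.Prime]

lemma norm_sub_lt_inv_of_mem_approxSet {ξ : ℚ_[p]} {w : ℝ} {α : ℚ} (hα : α ∈ approxSet ξ w)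
    {X e : ℕ} (hX : 0 < X) (hXe : X < ratHeight α ^ e) (he : (e : ℝ) ≤ w + 1) :
    ‖ξ - α‖ < (X : ℝ)⁻¹ := by
  have hH : (1 : ℝ) ≤ ratHeight α := by exact_mod_cast ratHeight_pos α
  calc ‖ξ - α‖ ≤ (ratHeight α : ℝ) ^ (-(w + 1)) := hα.2
    _ ≤ (ratHeight α : ℝ) ^ (-(e : ℝ)) := Real.rpow_le_rpow_of_exponent_le hH (neg_le_neg he)
    _ = ((ratHeight α ^ e : ℕ) : ℝ)⁻¹ := by
        rw [Real.rpow_neg (by positivity), Real.rpow_natCast]; push_cast; rfl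
    _ < (X : ℝ)⁻¹ := inv_strictAnti₀ (by exact_mod_cast hX) (by exact_mod_cast hXe)

lemma norm_sub_le_rpow_log_of_mem_approxSet {ξ : ℚ_[p]} {w : ℝ} {α : ℚ} (hα : α ∈ approxSet ξ w)
    (hw : 0 ≤ w + 1) : ‖ξ - α‖ ≤ (p : ℝ) ^ (-((w + 1) * Nat.log p (ratHeight α))) := by
  calc ‖ξ - α‖ ≤ (ratHeight α : ℝ) ^ (-(w + 1)) := hα.2
    _ ≤ ((p : ℝ) ^ Nat.log p (ratHeight α)) ^ (-(w + 1)) :=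
        Real.rpow_le_rpow_of_nonpos (pow_pos (by exact_mod_cast hp.out.pos) _)
          (by exact_mod_cast Nat.pow_log_le_self p (ratHeight_pos α).ne') (by linarith)
    _ = _ := by rw [← Real.rpow_natCast_mul (by positivity)]; ring_nf

variable {a : ℕ → ℕ} {κ n₀ : ℕ} {w : ℝ}

lemma exists_periodicValue_eq_of_mem_approxSet {α : ℚ} (ha : ∀ k, a k < p)
    (hcomp : ∀ n, n₀ ≤ n → complexity a n ≤ κ * n) (hw : (κ : ℝ) + 1 ≤ w)
    (hα : α ∈ approxSet (digitSeries p a) w) (hH : 2 * p ^ (2 * κ) < ratHeight α)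
    (hL : n₀ + 2 ≤ Nat.log p (ratHeight α)) :
    ∃ i t, 0 < t ∧ i + t ≤ 2 * κ * Nat.log p (ratHeight α) ∧ α = periodicValue p a i t := by
  set H := ratHeight α
  set L := Nat.log p H
  have hrange : (Set.range a).Finite :=
    (Set.finite_Iio p).subset (Set.range_subset_iff.mpr ha)
  obtain ⟨i, t, ht, hit, hagree⟩ :=
    exists_eq_periodicExt_of_complexity_le hrange (hcomp (L + 2) (by omega))
  refine ⟨i, t, ht, by nlinarith, ?_⟩
  set Hβ := ratHeight (periodicValue p a i t)
  have hH0 : 0 < H := ratHeight_pos α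
  have hp0 : 0 < p := hp.out.pos
  have hpL : p ^ L ≤ H := Nat.pow_log_le_self p hH0.ne'
  have hHL : H < p ^ (L + 1) := Nat.lt_pow_succ_log_self hp.out.one_lt H
  have hHβ : Hβ ≤ p ^ (2 * κ) * H ^ κ := by
    calc Hβ ≤ p ^ (i + t) := ratHeight_periodicValue_le ha ht
      _ ≤ p ^ (κ * (L + 2)) := Nat.pow_le_pow_right hp0 hit
      _ = p ^ (2 * κ) * (p ^ L) ^ κ := by ring
      _ ≤ p ^ (2 * κ) * H ^ κ := Nat.mul_le_mul_left _ (Nat.pow_le_pow_left hpL κ)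
  have hpos : 0 < 2 * H * Hβ := by
    have := ratHeight_pos (periodicValue p a i t)
    positivity
  have hfar : 2 * H * Hβ < H ^ (κ + 2) :=
    calc 2 * H * Hβ ≤ 2 * H * (p ^ (2 * κ) * H ^ κ) := Nat.mul_le_mul_left _ hHβ
      _ = 2 * p ^ (2 * κ) * H ^ (κ + 1) := by ring
      _ < H * H ^ (κ + 1) := Nat.mul_lt_mul_of_pos_right hH (by positivity)
      _ = H ^ (κ + 2) := by ring
  have hnear : 2 * H * Hβ < p ^ (i + t + (L + 2)) :=
    calc 2 * H * Hβ < 2 * p ^ (L + 1) * p ^ (i + t) :=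
          Nat.mul_lt_mul_of_lt_of_le (by omega) (ratHeight_periodicValue_le ha ht) (by positivity)
      _ ≤ p * p ^ (L + 1) * p ^ (i + t) := by gcongr; exact hp.out.two_le
      _ = p ^ (i + t + (L + 2)) := by ring
  refine eq_of_norm_sub_lt_inv_two_mul_ratHeight
    (norm_sub_lt_inv_of_mem_approxSet hα hpos hfar (by push_cast; linarith))
    ((norm_digitSeries_sub_periodicValue_le ht hagree).trans_lt ?_)
  rw [inv_pow]
  exact inv_strictAnti₀ (by exact_mod_cast hpos) (by exact_mod_cast hnear)

lemma frequently_hasPowerPrefix_of_infinite (ha : ∀ k, a k < p) (hκ : 0 < κ)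
    (hcomp : ∀ n, n₀ ≤ n → complexity a n ≤ κ * n) (hw : 2 * (κ : ℝ) ≤ w)
    (hinf : (approxSet (digitSeries p a) w).Infinite) :
    ∃ᶠ P in atTop, HasPowerPrefix a ((w + 1) / (2 * κ)) P := by
  rw [frequently_atTop]
  intro M
  obtain ⟨α, hα, hαB⟩ :=
    (hinf.sdiff (finite_setOf_ratHeight_le (2 * p ^ (2 * κ) + p ^ (n₀ + M + 2)))).nonempty
  simp only [Set.mem_ofPred_eq, not_le] at hαB
  have hL : n₀ + M + 2 ≤ Nat.log p (ratHeight α) := Nat.le_log_of_pow_le hp.out.one_lt (by omega)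
  have hκR : (1 : ℝ) ≤ κ := by exact_mod_cast hκ
  obtain ⟨i, t, ht, hit, rfl⟩ := exists_periodicValue_eq_of_mem_approxSet ha hcomp (by linarith) hα
    (by omega) (by omega)
  set L := Nat.log p (ratHeight (periodicValue p a i t))
  have hagree : ∀ k : ℕ, (k : ℝ) < (w + 1) * L → a k = periodicExt a i t k := by
    refine fun k hk => eq_of_norm_digitSeries_sub_le_rpow ha
      (fun k => by unfold periodicExt; split_ifs <;> exact ha _) ?_ hk
    rw [digitSeries_periodicExt a ht]
    exact norm_sub_le_rpow_log_of_mem_approxSet hα (by linarith)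
  set m := ⌈(w + 1) * L⌉₊
  have hitR : (i : ℝ) + t ≤ 2 * κ * L := by exact_mod_cast hit
  have hm : (w + 1) * L ≤ m := Nat.le_ceil _
  have hLR : (2 * κ + 1 : ℝ) * L ≤ (w + 1) * L := by gcongr
  have him : i + (M + 1) ≤ m := by
    have hML : ((M + 1 : ℕ) : ℝ) ≤ L := by exact_mod_cast (by omega : M + 1 ≤ L)
    have ht1 : (1 : ℝ) ≤ t := by exact_mod_cast ht
    have : ((i + (M + 1) : ℕ) : ℝ) ≤ m := by push_cast at hML ⊢; linarith
    exact_mod_cast this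
  refine ⟨m - i, by omega, i, t, ht, fun k hk => hagree k (Nat.lt_ceil.mp (by omega)), ?_⟩
  rw [Nat.cast_sub (by omega), add_sub_cancel, div_mul_eq_mul_div, div_le_iff₀ (by positivity)]
  nlinarith

end Approximation

theorem w_one_le_of_linear_complexity_and_finite_dio_general
    (p : ℕ) [Fact p.Prime] (a : ℕ → ℕ) (ha : ∀ n, a n < p)
    (κ n₀ : ℕ) (hκ : 2 ≤ κ)
    (hcomp : ∀ n, n₀ ≤ n → complexity a n ≤ κ * n)
    (hfin : BddAbove {ρ : ℝ | DioCond a ρ}) :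
    ∀ w : ℝ, 8 * ((κ : ℝ) + 1) ^ 2 * (2 * κ + 1) * dioExp a - 1 < w →
      (approxSet (∑' n : ℕ, (a n : ℚ_[p]) * (p : ℚ_[p]) ^ n) w).Finite := by
  intro w hw
  by_contra hinf
  have hD : 1 ≤ dioExp a := le_csSup hfin dioCond_one
  have hκR : (2 : ℝ) ≤ κ := by exact_mod_cast hκ
  have hcoef : 2 * (κ : ℝ) + 1 ≤ 8 * ((κ : ℝ) + 1) ^ 2 * (2 * κ + 1) := by nlinarith
  have hρ : (w + 1) / (2 * κ) ≤ dioExp a := le_csSup hfin <| dioCond_of_frequently_hasPowerPrefix <|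
    frequently_hasPowerPrefix_of_infinite ha (by omega) hcomp (by nlinarith) hinf
  rw [div_le_iff₀ (by positivity)] at hρ
  nlinarith [mul_le_mul_of_nonneg_right hcoef (zero_le_one.trans hD)]

/-- If the digits of `ξ` have linear complexity and finite Diophantine exponent,
then `w₁(ξ) ≤ 8(κ+1)²(2κ+1)·Dio(a) − 1`; in particular `ξ` is not a `U₁`-number. -/
theorem w_one_le_of_linear_complexity_and_finite_dio
    (p : ℕ) [Fact p.Prime] (a : ℕ → ℕ) (ha : ∀ n, a n < p)
    (hnp : ¬ UltimatelyPeriodic a)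
    (κ n₀ : ℕ) (hκ : 2 ≤ κ) (hn₀ : 1 ≤ n₀)
    (hcomp : ∀ n, n₀ ≤ n → complexity a n ≤ κ * n)
    (hfin : BddAbove {ρ : ℝ | DioCond a ρ}) :
    ∀ w : ℝ, 8 * ((κ : ℝ) + 1) ^ 2 * (2 * κ + 1) * dioExp a - 1 < w →
      (approxSet (∑' n : ℕ, (a n : ℚ_[p]) * (p : ℚ_[p]) ^ n) w).Finite :=
  w_one_le_of_linear_complexity_and_finite_dio_general p a ha κ n₀ hκ hcomp hfin
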